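/- Define G(s) = σ²cos(sν) - σν sin(sν) + ν²e^{sσ} for fixed σ, ν > 0. Then G(s) > G(0) for all s > 0. -/
import Mathlib

open Real

/-- For `σ, ν > 0` and `G(s) = σ²cos(sν) - σν sin(sν) + ν²e^{sσ}`,
`G(s) > G(0)` for all `s > 0`. -/
theorem stmt2 (σ ν : ℝ) (hσ : 0 < σ) (hν : 0 < ν) (G : ℝ → ℝ)
    (hG : ∀ s, G s = σ ^ 2 * Real.cos (s * ν) - σ * ν * Real.sin (s * ν) +
      ν ^ 2 * Real.exp (s * σ)) :
    ∀ s > 0, G s > G 0 := by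
  intro s hs
  rw [hG s, hG 0]
  simp only [zero_mul, Real.cos_zero, Real.sin_zero, Real.exp_zero, mul_one, mul_zero, sub_zero]
  have hx : 0 < s * ν := mul_pos hs hν
  have hy : 0 < s * σ := mul_pos hs hσ
  have h1 : 1 - (s * ν) ^ 2 / 2 ≤ Real.cos (s * ν) := Real.one_sub_sq_div_two_le_cos
  have h2 : Real.sin (s * ν) < s * ν := Real.sin_lt hx
  have h3 : 1 + s * σ + (s * σ) ^ 2 / 2 ≤ Real.exp (s * σ) :=
    Real.quadratic_le_exp_of_nonneg hy.le
  nlinarith [sq_nonneg σ, sq_nonneg ν, mul_pos hσ hν, sq_nonneg (s * σ), sq_nonneg (s * ν),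
    mul_pos (mul_pos hσ hν) hσ]
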